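/- arXiv:1312.1497 — 2 statements merged into one kernel-verified Lean document; each statement's English description precedes it below -/
import Mathlib

section
/- For every sS_∞-invariant normal subgroup H of Z_2^{*∞}, one has F(C_H) = H. -/
open Classical

/-- A partition diagram with `upper` upper points and `lower` lower points; the blocks are
encoded by the equivalence relation (setoid) on the disjoint union of the points. -/
structure PartitionDiagram where
  upper : ℕ
  lower : ℕ
  rel : Setoid (Fin upper ⊕ Fin lower)

namespace PartitionDiagram

/-- The partition determined by a labelling of the points: two points lie in the same block
iff they receive the same label. -/
def ofLabels {u l : ℕ} (f : Fin u ⊕ Fin l → ℕ) : PartitionDiagram :=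
  ⟨u, l, Setoid.ker f⟩

/-- The identity partition `| ∈ P(1,1)`. -/
def idPartition : PartitionDiagram := ofLabels (u := 1) (l := 1) fun _ => 0

/-- The pair partition `⊓ ∈ P(0,2)`. -/
def pairPartition : PartitionDiagram := ofLabels (u := 0) (l := 2) fun _ => 0

/-- The four block partition `⊓⊓ ∈ P(0,4)`. -/
def fourBlock : PartitionDiagram := ofLabels (u := 0) (l := 4) fun _ => 0

/-- The singleton partition `↑ ∈ P(0,1)`. -/
def singletonPartition : PartitionDiagram := ofLabels (u := 0) (l := 1) fun _ => 0

/-- The double singleton partition `↑⊗↑ ∈ P(0,2)`. -/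
def doubleSingleton : PartitionDiagram :=
  ofLabels (u := 0) (l := 2) (Sum.elim (fun i => (i : ℕ)) fun j => (j : ℕ))

/-- The crossing partition `⨯ ∈ P(2,2)`, with blocks `{1,2'}` and `{2,1'}`. -/
def crossing : PartitionDiagram :=
  ofLabels (u := 2) (l := 2) (Sum.elim (fun i => (i : ℕ)) fun j => 1 - (j : ℕ))

/-- The pair positioner partition `▷ ∈ P(3,3)`, with blocks `{1,2,2',3'}` and `{3,1'}`. -/
def pairPositioner : PartitionDiagram :=
  ofLabels (u := 3) (l := 3)
    (Sum.elim (fun i => if (i : ℕ) = 2 then 1 else 0) fun j => if (j : ℕ) = 0 then 1 else 0)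

/-- The partition `k_l ∈ P(l+2, l+2)` consisting of the four block `{1, 1', l+2, (l+2)'}`
together with the pairs `{j, j'}` for `2 ≤ j ≤ l+1`. -/
def kPart (n : ℕ) : PartitionDiagram :=
  ofLabels (u := n + 2) (l := n + 2)
    (fun x => if (Sum.elim Fin.val Fin.val x) = 0 ∨ (Sum.elim Fin.val Fin.val x) = n + 1
      then 0 else Sum.elim Fin.val Fin.val x)

/-- The involution `p* ∈ P(l,k)` of `p ∈ P(k,l)`: turn the partition upside down. -/
def invol (p : PartitionDiagram) : PartitionDiagram :=
  ⟨p.lower, p.upper, Setoid.comap Sum.swap p.rel⟩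

/-- Auxiliary map splitting the points of a tensor product into the points of the two factors. -/
def splitPoint {a b c d : ℕ} (x : Fin (a + b) ⊕ Fin (c + d)) :
    (Fin a ⊕ Fin c) ⊕ (Fin b ⊕ Fin d) :=
  match x with
  | Sum.inl u =>
    match finSumFinEquiv.symm u with
    | Sum.inl i => Sum.inl (Sum.inl i)
    | Sum.inr i => Sum.inr (Sum.inl i)
  | Sum.inr v =>
    match finSumFinEquiv.symm v with
    | Sum.inl j => Sum.inl (Sum.inr j)
    | Sum.inr j => Sum.inr (Sum.inr j)

/-- The tensor product (horizontal concatenation) `p ⊗ q` of two partitions. -/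
def tensor (p q : PartitionDiagram) : PartitionDiagram :=
  ⟨p.upper + q.upper, p.lower + q.lower,
    Setoid.ker fun x =>
      Sum.map (Quotient.mk p.rel) (Quotient.mk q.rel) (splitPoint x)⟩

section Composition

variable (p q : PartitionDiagram) (h : p.lower = q.upper)

/-- Inclusion of the points of `p` into the three-row diagram used for composition. -/
def iotaP : Fin p.upper ⊕ Fin p.lower → Fin p.upper ⊕ (Fin p.lower ⊕ Fin q.lower) :=
  Sum.map id Sum.inl

/-- Inclusion of the points of `q` into the three-row diagram used for composition,
identifying the upper points of `q` with the lower points of `p`. -/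
def iotaQ : Fin q.upper ⊕ Fin q.lower → Fin p.upper ⊕ (Fin p.lower ⊕ Fin q.lower) :=
  fun x => Sum.inr (Sum.map (Fin.cast h.symm) id x)

/-- The generating relation on the three-row diagram used for composition. -/
def compRel : Fin p.upper ⊕ (Fin p.lower ⊕ Fin q.lower) →
    Fin p.upper ⊕ (Fin p.lower ⊕ Fin q.lower) → Prop :=
  fun x y =>
    (∃ a b, p.rel.r a b ∧ x = iotaP p q a ∧ y = iotaP p q b) ∨
    (∃ a b, q.rel.r a b ∧ x = iotaQ p q h a ∧ y = iotaQ p q h b)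

/-- The composition (vertical concatenation) `qp ∈ P(k,m)` of `p ∈ P(k,l)` and `q ∈ P(l,m)`:
identify the lower points of `p` with the upper points of `q`, take the join of the block
structures and restrict to the upper points of `p` and the lower points of `q`. -/
def comp : PartitionDiagram :=
  ⟨p.upper, q.lower,
    Setoid.comap (Sum.map id Sum.inr) (Relation.EqvGen.setoid (compRel p q h))⟩

end Composition

/-- Rotation of the leftmost upper point to the leftmost lower position. -/
def rotLU (p : PartitionDiagram) (h : 0 < p.upper) : PartitionDiagram :=
  ⟨p.upper - 1, p.lower + 1,
    Setoid.comap (fun x => match x with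
      | Sum.inl j => Sum.inl (⟨(j : ℕ) + 1, by have := j.isLt; omega⟩ : Fin p.upper)
      | Sum.inr j => if hj : (j : ℕ) = 0 then Sum.inl (⟨0, h⟩ : Fin p.upper)
          else Sum.inr (⟨(j : ℕ) - 1, by have := j.isLt; omega⟩ : Fin p.lower)) p.rel⟩

/-- Rotation of the leftmost lower point to the leftmost upper position. -/
def rotLD (p : PartitionDiagram) (h : 0 < p.lower) : PartitionDiagram :=
  ⟨p.upper + 1, p.lower - 1,
    Setoid.comap (fun x => match x with
      | Sum.inl j => if hj : (j : ℕ) = 0 then Sum.inr (⟨0, h⟩ : Fin p.lower)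
          else Sum.inl (⟨(j : ℕ) - 1, by have := j.isLt; omega⟩ : Fin p.upper)
      | Sum.inr j => Sum.inr (⟨(j : ℕ) + 1, by have := j.isLt; omega⟩ : Fin p.lower)) p.rel⟩

/-- Rotation of the rightmost upper point to the rightmost lower position. -/
def rotRU (p : PartitionDiagram) (h : 0 < p.upper) : PartitionDiagram :=
  ⟨p.upper - 1, p.lower + 1,
    Setoid.comap (fun x => match x with
      | Sum.inl j => Sum.inl (⟨(j : ℕ), by have := j.isLt; omega⟩ : Fin p.upper)
      | Sum.inr j => if hj : (j : ℕ) < p.lower then Sum.inr (⟨(j : ℕ), hj⟩ : Fin p.lower)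
          else Sum.inl (⟨p.upper - 1, by omega⟩ : Fin p.upper)) p.rel⟩

/-- Rotation of the rightmost lower point to the rightmost upper position. -/
def rotRD (p : PartitionDiagram) (h : 0 < p.lower) : PartitionDiagram :=
  ⟨p.upper + 1, p.lower - 1,
    Setoid.comap (fun x => match x with
      | Sum.inl j => if hj : (j : ℕ) < p.upper then Sum.inl (⟨(j : ℕ), hj⟩ : Fin p.upper)
          else Sum.inr (⟨p.lower - 1, by omega⟩ : Fin p.lower)
      | Sum.inr j => Sum.inr (⟨(j : ℕ), by have := j.isLt; omega⟩ : Fin p.lower)) p.rel⟩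

/-- The partition obtained from `p` by merging the block of the point `a` and the block of
the point `b` into a single block, leaving all other blocks unchanged. -/
noncomputable def mergeBlocks (p : PartitionDiagram)
    (a b : Fin p.upper ⊕ Fin p.lower) : PartitionDiagram :=
  ⟨p.upper, p.lower,
    Setoid.ker fun x =>
      if p.rel.r x a ∨ p.rel.r x b then (none : Option (Quotient p.rel))
      else some (Quotient.mk p.rel x)⟩

end PartitionDiagram

open PartitionDiagram

/-- A set of partitions is a category of partitions if it contains the identity partition and
the pair partition and is closed under tensor products, composition, involution and the four
rotation operations. -/
structure IsPartitionCategory (M : Set PartitionDiagram) : Prop where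
  id_mem : idPartition ∈ M
  pair_mem : pairPartition ∈ M
  tensor_mem : ∀ p ∈ M, ∀ q ∈ M, tensor p q ∈ M
  comp_mem : ∀ p ∈ M, ∀ q ∈ M, ∀ h : p.lower = q.upper, comp p q h ∈ M
  invol_mem : ∀ p ∈ M, invol p ∈ M
  rotLU_mem : ∀ p ∈ M, ∀ h : 0 < p.upper, rotLU p h ∈ M
  rotLD_mem : ∀ p ∈ M, ∀ h : 0 < p.lower, rotLD p h ∈ M
  rotRU_mem : ∀ p ∈ M, ∀ h : 0 < p.upper, rotRU p h ∈ M
  rotRD_mem : ∀ p ∈ M, ∀ h : 0 < p.lower, rotRD p h ∈ M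

/-- A category of partitions is group-theoretical if it contains the pair positioner
partition `▷`. -/
def IsGroupTheoreticalCategory (M : Set PartitionDiagram) : Prop :=
  IsPartitionCategory M ∧ pairPositioner ∈ M

/-- The smallest category of partitions containing a given set of partitions. -/
def generatedCategory (S : Set PartitionDiagram) : Set PartitionDiagram :=
  ⋂₀ { M | IsPartitionCategory M ∧ S ⊆ M }

/-- The group `Z_2^{*∞}`: the free product of countably many copies of the cyclic group of
order two. -/
abbrev FreeZ2 := Monoid.CoprodI (fun _ : ℕ => Multiplicative (ZMod 2))

/-- The free generators `a_1, a_2, …` of `Z_2^{*∞}`, each of order two. -/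
def gen (n : ℕ) : FreeZ2 :=
  Monoid.CoprodI.of (i := n) (Multiplicative.ofAdd (1 : ZMod 2))

/-- A labelling of a partition assigns (indices of) pairwise distinct generators of
`Z_2^{*∞}` to the blocks: two points receive the same label iff they lie in the same block. -/
def IsLabelling (p : PartitionDiagram) (lab : Fin p.upper ⊕ Fin p.lower → ℕ) : Prop :=
  ∀ x y, lab x = lab y ↔ p.rel.r x y

/-- The word `w(p,l) ∈ Z_2^{*∞}` of a labelled partition: after rotating all upper points to
the right-hand end of the lower row, read off the generators assigned to the points from left
to right, i.e. read the lower points from left to right and then the upper points from right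
to left. -/
def wordOf (p : PartitionDiagram) (lab : Fin p.upper ⊕ Fin p.lower → ℕ) : FreeZ2 :=
  ((List.ofFn fun j : Fin p.lower => gen (lab (Sum.inr j))) ++
    (List.ofFn fun i : Fin p.upper => gen (lab (Sum.inl i))).reverse).prod

/-- `F(C) ⊆ Z_2^{*∞}` is the set of all `w(p,l)` where `p ∈ C` and `l` is a labelling. -/
def Fmap (M : Set PartitionDiagram) : Set FreeZ2 :=
  { g | ∃ p ∈ M, ∃ lab, IsLabelling p lab ∧ wordOf p lab = g }

/-- The set of partitions admitting a labelling whose word lies in `H`. -/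
def catOf (H : Set FreeZ2) : Set PartitionDiagram :=
  { p | ∃ lab, IsLabelling p lab ∧ wordOf p lab ∈ H }

/-- The endomorphism of `Z_2^{*∞}` identifying letters according to `f`, i.e. sending
`a_k` to `a_{f k}` for every `k`. -/
def identifyLetters (f : ℕ → ℕ) : Monoid.End FreeZ2 :=
  Monoid.CoprodI.lift fun i =>
    (Monoid.CoprodI.of (M := fun _ : ℕ => Multiplicative (ZMod 2)) (i := f i))

/-- The strong symmetric semigroup `sS_∞`: the subsemigroup of `End(Z_2^{*∞})` generated by
the finite identifications of letters. -/
def strongSymmetricSemigroup : Subsemigroup (Monoid.End FreeZ2) :=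
  Subsemigroup.closure
    { φ | ∃ f : ℕ → ℕ, (∃ n : ℕ, ∀ k, n ≤ k → f k = k) ∧ φ = identifyLetters f }

/-- A subset of `Z_2^{*∞}` is `sS_∞`-invariant if it is preserved by every element of the
strong symmetric semigroup. -/
def IsSSInvariant (H : Set FreeZ2) : Prop :=
  ∀ φ ∈ strongSymmetricSemigroup, ∀ g ∈ H, φ g ∈ H

/-- A partition is in single leg form if it has no upper points and no two consecutive
points belong to the same block. -/
def IsSingleLeg (p : PartitionDiagram) : Prop :=
  p.upper = 0 ∧
    ∀ i j : Fin p.lower, (j : ℕ) = (i : ℕ) + 1 → ¬ p.rel.r (Sum.inr i) (Sum.inr j)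

/-- `C_sl`: the set of all partitions in `C` with no upper points in single leg form. -/
def slSet (M : Set PartitionDiagram) : Set PartitionDiagram :=
  { p ∈ M | IsSingleLeg p }

/-- The partition with no upper points determined by a word (a list of letters): two points
lie in the same block iff the corresponding letters coincide. -/
def wordPartition (w : List ℕ) : PartitionDiagram :=
  ofLabels (u := 0) (l := w.length) (Sum.elim (fun i => (i : ℕ)) fun j => w.get j)

/-- The canonical letter of the block of a lower point: the least index of a point in its
block. -/
noncomputable def blockLabel (p : PartitionDiagram) (j : Fin p.lower) : ℕ :=
  sInf { i : ℕ | ∃ h : i < p.lower, p.rel.r (Sum.inr ⟨i, h⟩) (Sum.inr j) }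

/-- The canonical word of a partition with no upper points. -/
noncomputable def canonWord (p : PartitionDiagram) : List ℕ :=
  List.ofFn fun j : Fin p.lower => blockLabel p j

/-- Full reduction of a word over an alphabet of involutions: repeatedly delete adjacent
equal pairs of letters.  This computes the result of iterating the operation replacing every
exponent in the run-decomposition of the word by its parity. -/
def reduceWord (w : List ℕ) : List ℕ :=
  w.foldr (fun x acc => match acc with
    | [] => [x]
    | y :: rest => if x = y then rest else x :: y :: rest) []

/-- The single leg version of a partition with no upper points: the unique partition in
single leg form obtained by iteratively replacing every exponent in its run-decomposition by
its parity. -/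
noncomputable def singleLegVersion (p : PartitionDiagram) : PartitionDiagram :=
  wordPartition (reduceWord (canonWord p))

/-!
Two labellings of the same partition differ by a map `f` on letters which moves only finitely
many of them, so their words differ by the element `identifyLetters f` of `sS_∞`; this gives
`F(C_H) ⊆ H`. Conversely, every element of `Z_2^{*∞}` is a product `a_{w₁} ⋯ a_{wₙ}` of
generators, which is the word of the partition whose blocks are the positions carrying equal
letters, labelled by those letters.
-/

lemma identifyLetters_gen (f : ℕ → ℕ) (i : ℕ) :
    identifyLetters f (gen i) = gen (f i) :=
  Monoid.CoprodI.lift_of _ _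

lemma identifyLetters_wordOf (f : ℕ → ℕ) (p : PartitionDiagram)
    (lab : Fin p.upper ⊕ Fin p.lower → ℕ) :
    identifyLetters f (wordOf p lab) = wordOf p (f ∘ lab) := by
  simp [wordOf, map_list_prod, List.map_reverse, List.map_ofFn, Function.comp_def,
    identifyLetters_gen]

lemma identifyLetters_mem_strongSymmetricSemigroup {f : ℕ → ℕ} {n : ℕ}
    (hf : ∀ k, n ≤ k → f k = k) : identifyLetters f ∈ strongSymmetricSemigroup :=
  Subsemigroup.subset_closure ⟨f, ⟨n, hf⟩, rfl⟩

lemma IsLabelling.exists_eq_comp {p : PartitionDiagram}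
    {lab₀ lab : Fin p.upper ⊕ Fin p.lower → ℕ}
    (hlab₀ : IsLabelling p lab₀) (hlab : IsLabelling p lab) :
    ∃ f : ℕ → ℕ, (∃ n, ∀ k, n ≤ k → f k = k) ∧ f ∘ lab₀ = lab := by
  let f : ℕ → ℕ := fun k => if h : ∃ x, lab₀ x = k then lab h.choose else k
  refine ⟨f, ⟨Finset.univ.sup lab₀ + 1, fun k hk => dif_neg ?_⟩, funext fun x => ?_⟩
  · rintro ⟨x, rfl⟩
    have := Finset.le_sup (f := lab₀) (Finset.mem_univ x)
    omega
  · have hx : ∃ y, lab₀ y = lab₀ x := ⟨x, rfl⟩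
    simp only [Function.comp_apply, f, dif_pos hx]
    exact (hlab _ _).mpr ((hlab₀ _ _).mp hx.choose_spec)

lemma exists_list_prod_map_gen (g : FreeZ2) : ∃ w : List ℕ, (w.map gen).prod = g := by
  induction g using Monoid.CoprodI.induction_on with
  | one => exact ⟨[], rfl⟩
  | of i m =>
    obtain ⟨a, rfl⟩ : ∃ a : ZMod 2, Multiplicative.ofAdd a = m := ⟨m.toAdd, rfl⟩
    rcases (by decide : ∀ a : ZMod 2, a = 0 ∨ a = 1) a with rfl | rfl
    · exact ⟨[], by simp⟩
    · exact ⟨[i], by simp [gen]⟩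
  | mul x y hx hy =>
    obtain ⟨w₁, rfl⟩ := hx
    obtain ⟨w₂, rfl⟩ := hy
    exact ⟨w₁ ++ w₂, by simp⟩

def wordLabelling (w : List ℕ) : Fin 0 ⊕ Fin w.length → ℕ :=
  Sum.elim (fun i => (i : ℕ)) fun j => w.get j

lemma isLabelling_wordLabelling (w : List ℕ) :
    IsLabelling (wordPartition w) (wordLabelling w) := fun _ _ => Iff.rfl

lemma wordOf_wordLabelling (w : List ℕ) :
    wordOf (wordPartition w) (wordLabelling w) = (w.map gen).prod := by
  simp only [wordOf, wordPartition, ofLabels, wordLabelling, List.ofFn_zero, List.reverse_nil,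
    List.append_nil, Sum.elim_inr]
  exact congrArg List.prod (List.ofFn_getElem_eq_map w gen)

lemma Fmap_catOf_subset {H : Set FreeZ2} (hInv : IsSSInvariant H) : Fmap (catOf H) ⊆ H := by
  rintro _ ⟨p, ⟨lab₀, hlab₀, hH⟩, lab, hlab, rfl⟩
  obtain ⟨f, ⟨n, hf⟩, rfl⟩ := hlab₀.exists_eq_comp hlab
  rw [← identifyLetters_wordOf]
  exact hInv _ (identifyLetters_mem_strongSymmetricSemigroup hf) _ hH

lemma subset_Fmap_catOf (H : Set FreeZ2) : H ⊆ Fmap (catOf H) := by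
  intro g hg
  obtain ⟨w, rfl⟩ := exists_list_prod_map_gen g
  rw [← wordOf_wordLabelling] at hg ⊢
  exact ⟨_, ⟨_, isLabelling_wordLabelling w, hg⟩, _, isLabelling_wordLabelling w, rfl⟩

theorem Fmap_catOf_eq_general (H : Subgroup FreeZ2)
    (hInv : IsSSInvariant (H : Set FreeZ2)) :
    Fmap (catOf (H : Set FreeZ2)) = (H : Set FreeZ2) :=
  (Fmap_catOf_subset hInv).antisymm (subset_Fmap_catOf _)

/-- For every `sS_∞`-invariant normal subgroup `H` of `Z_2^{*∞}`, one has
`F(C_H) = H`. -/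
theorem Fmap_catOf_eq (H : Subgroup FreeZ2) (hN : H.Normal)
    (hInv : IsSSInvariant (H : Set FreeZ2)) :
    Fmap (catOf (H : Set FreeZ2)) = (H : Set FreeZ2) :=
  Fmap_catOf_eq_general H hInv
end

section
/- For the category of partitions C = ⟨▷⟩ generated by the pair positioner partition, F(C) is the trivial subgroup {e} of Z_2^{*∞}; equivalently, w(p,l) = e for every partition p ∈ ⟨▷⟩ and every labelling l of p. -/
open Classical

open PartitionDiagram

/-!
Call a partition word-trivial if every labelling that is merely constant on its blocks (distinct
blocks may receive the same generator) has trivial word. Allowing blocks to be merged makes the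
word-trivial partitions closed under composition: a labelling of the composite extends, block by
block, to the three-row diagram, where the middle row links the words of the two factors. Tensor
products multiply the words, involution inverts them, and rotations conjugate them by a generator
or leave them unchanged, so the word-trivial partitions form a category of partitions. It
contains `▷`, whose word `a b b a b b` stays trivial under every identification of letters,
hence it contains `⟨▷⟩`.
-/

lemma gen_mul_self (k : ℕ) : gen k * gen k = 1 := by
  rw [gen, ← map_mul]
  exact map_one _

lemma mul_gen_mul_gen (x : FreeZ2) (k : ℕ) : x * gen k * gen k = x := by
  rw [mul_assoc, gen_mul_self, mul_one]

lemma gen_mul_gen_mul (k : ℕ) (x : FreeZ2) : gen k * (gen k * x) = x := by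
  rw [← mul_assoc, gen_mul_self, one_mul]

lemma gen_inv (k : ℕ) : (gen k)⁻¹ = gen k :=
  inv_eq_of_mul_eq_one_right (gen_mul_self k)

def rowWord {n : ℕ} (f : Fin n → ℕ) : FreeZ2 :=
  (List.ofFn fun i => gen (f i)).prod

lemma rowWord_succ {n : ℕ} (f : Fin (n + 1) → ℕ) :
    rowWord f = gen (f 0) * rowWord fun i => f i.succ := by
  rw [rowWord, List.ofFn_succ, List.prod_cons]; rfl

lemma rowWord_castSucc {n : ℕ} (f : Fin (n + 1) → ℕ) :
    rowWord f = (rowWord fun i => f i.castSucc) * gen (f (Fin.last n)) := by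
  rw [rowWord, List.ofFn_succ', List.concat_eq_append, List.prod_append, List.prod_singleton]
  rfl

lemma rowWord_add {m n : ℕ} (f : Fin (m + n) → ℕ) :
    rowWord f = (rowWord fun i => f (Fin.castAdd n i)) * rowWord fun j => f (Fin.natAdd m j) := by
  rw [rowWord, List.ofFn_add, List.prod_append]; rfl

lemma rowWord_cast {m n : ℕ} (h : m = n) (f : Fin n → ℕ) :
    (rowWord fun i => f (Fin.cast h i)) = rowWord f := by
  subst h; rfl

lemma wordOf_eq_one_iff (p : PartitionDiagram) (lab : Fin p.upper ⊕ Fin p.lower → ℕ) :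
    wordOf p lab = 1 ↔ (rowWord fun j => lab (Sum.inr j)) = rowWord fun i => lab (Sum.inl i) := by
  rw [wordOf, List.prod_append, List.prod_reverse_noncomm, List.map_ofFn, mul_inv_eq_one]
  simp only [Function.comp_def, gen_inv]
  rfl

lemma identifyLetters_gen_s16 (φ : ℕ → ℕ) (k : ℕ) : identifyLetters φ (gen k) = gen (φ k) :=
  Monoid.CoprodI.lift_of _ _

lemma wordOf_comp (p : PartitionDiagram) (φ : ℕ → ℕ) (lab : Fin p.upper ⊕ Fin p.lower → ℕ) :
    wordOf p (φ ∘ lab) = identifyLetters φ (wordOf p lab) := by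
  simp only [wordOf, map_list_prod, List.map_append, List.map_reverse, List.map_ofFn,
    Function.comp_def, identifyLetters_gen_s16]

lemma Setoid.exists_extend_of_comap {α β γ : Type*} [Nonempty γ] (s : Setoid α) (f : β → α)
    {g : β → γ} (hg : ∀ a b, s (f a) (f b) → g a = g b) :
    ∃ G : α → γ, (∀ x y, s x y → G x = G y) ∧ G ∘ f = g := by
  have hfac : g.FactorsThrough fun b => (⟦f b⟧ : Quotient s) :=
    fun a b hab => hg a b (Quotient.exact hab)
  refine ⟨fun z => Function.extend (fun b => (⟦f b⟧ : Quotient s)) g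
    (fun _ => Classical.arbitrary γ) ⟦z⟧, fun x y hxy => congrArg _ (Quotient.sound hxy), ?_⟩
  exact funext fun b => hfac.extend_apply (fun _ => Classical.arbitrary γ) b

namespace PartitionDiagram

def IsBlockConstant (p : PartitionDiagram) (lab : Fin p.upper ⊕ Fin p.lower → ℕ) : Prop :=
  ∀ x y, p.rel.r x y → lab x = lab y

lemma IsLabelling.isBlockConstant {p : PartitionDiagram} {lab : Fin p.upper ⊕ Fin p.lower → ℕ}
    (h : IsLabelling p lab) : IsBlockConstant p lab :=
  fun x y hxy => (h x y).mpr hxy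

lemma IsBlockConstant.comp {p q : PartitionDiagram} {lab : Fin p.upper ⊕ Fin p.lower → ℕ}
    (h : IsBlockConstant p lab) (m : Fin q.upper ⊕ Fin q.lower → Fin p.upper ⊕ Fin p.lower)
    (hm : ∀ a b, q.rel.r a b → p.rel.r (m a) (m b)) : IsBlockConstant q (lab ∘ m) :=
  fun a b hab => h _ _ (hm a b hab)

def wordTrivial : Set PartitionDiagram :=
  { p | ∀ lab, IsBlockConstant p lab → wordOf p lab = 1 }

lemma mem_wordTrivial_of_rightInverse {p q : PartitionDiagram} (hp : p ∈ wordTrivial)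
    (m : Fin q.upper ⊕ Fin q.lower → Fin p.upper ⊕ Fin p.lower)
    (hm : ∀ a b, p.rel.r (m a) (m b) → q.rel.r a b)
    (g : Fin p.upper ⊕ Fin p.lower → Fin q.upper ⊕ Fin q.lower) (hg : Function.RightInverse g m)
    (hword : ∀ lab, wordOf p (lab ∘ g) = 1 → wordOf q lab = 1) : q ∈ wordTrivial := by
  refine fun lab hlab => hword lab (hp _ (hlab.comp g fun x y hxy => hm _ _ ?_))
  rwa [hg x, hg y]

lemma invol_mem_wordTrivial {p : PartitionDiagram} (hp : p ∈ wordTrivial) :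
    invol p ∈ wordTrivial := by
  refine mem_wordTrivial_of_rightInverse hp Sum.swap (fun _ _ => id) Sum.swap
    Sum.swap_swap fun lab h => ?_
  rw [wordOf_eq_one_iff] at h ⊢
  exact h.symm

lemma rotLU_mem_wordTrivial {p : PartitionDiagram} (hp : p ∈ wordTrivial) (h : 0 < p.upper) :
    rotLU p h ∈ wordTrivial := by
  obtain ⟨_ | u, l, r⟩ := p
  · exact absurd h (lt_irrefl 0)
  let g : Fin (u + 1) ⊕ Fin l → Fin u ⊕ Fin (l + 1) :=
    Sum.elim (Fin.cases (Sum.inr 0) Sum.inl) (fun j => Sum.inr j.succ)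
  refine mem_wordTrivial_of_rightInverse hp _ (fun _ _ => id) g ?_ fun lab hw => ?_
  · rintro (i | j)
    · induction i using Fin.cases <;> simp [g, Fin.ext_iff]
    · simp [g]
  · have hupper (f : Fin u ⊕ Fin (l + 1) → ℕ) : (rowWord fun i => f (g (Sum.inl i))) =
        gen (f (Sum.inr 0)) * rowWord fun i => f (Sum.inl i) :=
      rowWord_succ _
    rw [wordOf_eq_one_iff] at hw ⊢
    calc (rowWord fun j : Fin (l + 1) => lab (Sum.inr j))
        = gen (lab (Sum.inr (0 : Fin (l + 1)))) * rowWord fun j : Fin l => lab (Sum.inr j.succ) :=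
          rowWord_succ _
      _ = gen (lab (Sum.inr (0 : Fin (l + 1)))) * (gen (lab (Sum.inr (0 : Fin (l + 1)))) *
          rowWord fun i : Fin u => lab (Sum.inl i)) := congrArg (_ * ·) (hw.trans (hupper lab))
      _ = rowWord fun i : Fin u => lab (Sum.inl i) := gen_mul_gen_mul _ _

lemma rotRU_mem_wordTrivial {p : PartitionDiagram} (hp : p ∈ wordTrivial) (h : 0 < p.upper) :
    rotRU p h ∈ wordTrivial := by
  obtain ⟨_ | u, l, r⟩ := p
  · exact absurd h (lt_irrefl 0)
  let g : Fin (u + 1) ⊕ Fin l → Fin u ⊕ Fin (l + 1) :=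
    Sum.elim (Fin.lastCases (Sum.inr (Fin.last l)) Sum.inl) (fun j => Sum.inr j.castSucc)
  refine mem_wordTrivial_of_rightInverse hp _ (fun _ _ => id) g ?_ fun lab hw => ?_
  · rintro (i | j)
    · induction i using Fin.lastCases <;> simp [g, Fin.ext_iff]
    · simp [g]
  · have hupper (f : Fin u ⊕ Fin (l + 1) → ℕ) : (rowWord fun i => f (g (Sum.inl i))) =
        (rowWord fun i => f (Sum.inl i)) * gen (f (Sum.inr (Fin.last l))) := by
      simp [g, rowWord_castSucc (n := u)]
    rw [wordOf_eq_one_iff] at hw ⊢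
    calc (rowWord fun j : Fin (l + 1) => lab (Sum.inr j))
        = (rowWord fun j : Fin l => lab (Sum.inr j.castSucc)) * gen (lab (Sum.inr (Fin.last l))) :=
          rowWord_castSucc _
      _ = (rowWord fun i : Fin u => lab (Sum.inl i)) * gen (lab (Sum.inr (Fin.last l))) *
          gen (lab (Sum.inr (Fin.last l))) := congrArg (· * _) (hw.trans (hupper lab))
      _ = rowWord fun i : Fin u => lab (Sum.inl i) := mul_gen_mul_gen _ _

lemma rotLD_eq_invol_rotLU_invol (p : PartitionDiagram) (h : 0 < p.lower) :
    rotLD p h = invol (rotLU (invol p) h) := by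
  simp only [rotLD, rotLU, invol, mk.injEq, heq_eq_eq, true_and]
  ext x y
  rcases x with i | i <;> rcases y with j | j <;> simp [Setoid.comap_rel, apply_dite Sum.swap]

lemma rotRD_eq_invol_rotRU_invol (p : PartitionDiagram) (h : 0 < p.lower) :
    rotRD p h = invol (rotRU (invol p) h) := by
  simp only [rotRD, rotRU, invol, mk.injEq, heq_eq_eq, true_and]
  ext x y
  rcases x with i | i <;> rcases y with j | j <;> simp [Setoid.comap_rel, apply_dite Sum.swap]

def tensorInl (p q : PartitionDiagram) :
    Fin p.upper ⊕ Fin p.lower → Fin (p.upper + q.upper) ⊕ Fin (p.lower + q.lower) :=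
  Sum.map (Fin.castAdd q.upper) (Fin.castAdd q.lower)

def tensorInr (p q : PartitionDiagram) :
    Fin q.upper ⊕ Fin q.lower → Fin (p.upper + q.upper) ⊕ Fin (p.lower + q.lower) :=
  Sum.map (Fin.natAdd p.upper) (Fin.natAdd p.lower)

lemma tensor_rel_tensorInl {p q : PartitionDiagram} {a b : Fin p.upper ⊕ Fin p.lower}
    (h : p.rel.r a b) : (tensor p q).rel.r (tensorInl p q a) (tensorInl p q b) := by
  change Sum.map _ _ (splitPoint _) = Sum.map _ _ (splitPoint _)
  rcases a with i | i <;> rcases b with j | j <;>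
    simpa [tensorInl, splitPoint] using Quotient.sound h

lemma tensor_rel_tensorInr {p q : PartitionDiagram} {a b : Fin q.upper ⊕ Fin q.lower}
    (h : q.rel.r a b) : (tensor p q).rel.r (tensorInr p q a) (tensorInr p q b) := by
  change Sum.map _ _ (splitPoint _) = Sum.map _ _ (splitPoint _)
  rcases a with i | i <;> rcases b with j | j <;>
    simpa [tensorInr, splitPoint] using Quotient.sound h

lemma tensor_mem_wordTrivial {p q : PartitionDiagram} (hp : p ∈ wordTrivial)
    (hq : q ∈ wordTrivial) : tensor p q ∈ wordTrivial := by
  intro lab hlab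
  have hwp := hp _ (hlab.comp _ fun _ _ => tensor_rel_tensorInl)
  have hwq := hq _ (hlab.comp _ fun _ _ => tensor_rel_tensorInr)
  rw [wordOf_eq_one_iff] at hwp hwq ⊢
  change rowWord (fun j : Fin (p.lower + q.lower) => lab (Sum.inr j)) =
    rowWord fun i : Fin (p.upper + q.upper) => lab (Sum.inl i)
  rw [rowWord_add, rowWord_add]
  exact congrArg₂ (· * ·) hwp hwq

lemma comp_mem_wordTrivial {p q : PartitionDiagram} (hp : p ∈ wordTrivial) (hq : q ∈ wordTrivial)
    (h : p.lower = q.upper) : comp p q h ∈ wordTrivial := by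
  intro lab hlab
  -- extend `lab` to the middle row, constantly on the blocks of the joined diagram
  obtain ⟨G, hG, rfl⟩ :=
    Setoid.exists_extend_of_comap (Relation.EqvGen.setoid (compRel p q h)) (Sum.map id Sum.inr) hlab
  have hwp := hp (G ∘ iotaP p q) fun a b hab =>
    hG _ _ (Relation.EqvGen.rel _ _ (Or.inl ⟨a, b, hab, rfl, rfl⟩))
  have hwq := hq (G ∘ iotaQ p q h) fun a b hab =>
    hG _ _ (Relation.EqvGen.rel _ _ (Or.inr ⟨a, b, hab, rfl, rfl⟩))
  rw [wordOf_eq_one_iff] at hwp hwq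
  refine (wordOf_eq_one_iff (comp p q h) _).2 ?_
  exact hwq.trans ((rowWord_cast h.symm fun j => G (Sum.inr (Sum.inl j))).trans hwp)

lemma ofLabels_mem_wordTrivial {u l : ℕ} (f : Fin u ⊕ Fin l → ℕ)
    (hf : wordOf (ofLabels f) f = 1) : ofLabels f ∈ wordTrivial := by
  intro (lab : Fin u ⊕ Fin l → ℕ) hlab
  have hfac : lab.FactorsThrough f := hlab
  calc wordOf (ofLabels f) lab = wordOf (ofLabels f) (Function.extend f lab 0 ∘ f) :=
        congrArg _ (funext (hfac.extend_apply 0)).symm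
    _ = identifyLetters (Function.extend f lab 0) (wordOf (ofLabels f) f) := wordOf_comp _ _ _
    _ = 1 := by rw [hf, map_one]

lemma wordOf_pairPartition : wordOf pairPartition (fun _ => 0) = 1 :=
  gen_mul_self 0

lemma pairPositioner_mem_wordTrivial : pairPositioner ∈ wordTrivial := by
  refine ofLabels_mem_wordTrivial _ ?_
  change gen 1 * (gen 0 * (gen 0 * (gen 1 * (gen 0 * (gen 0 * 1))))) = 1
  simp only [mul_one, ← mul_assoc, gen_mul_self]

lemma isPartitionCategory_wordTrivial : IsPartitionCategory wordTrivial where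
  id_mem := ofLabels_mem_wordTrivial _ (gen_mul_self 0)
  pair_mem := ofLabels_mem_wordTrivial _ wordOf_pairPartition
  tensor_mem _ hp _ hq := tensor_mem_wordTrivial hp hq
  comp_mem _ hp _ hq h := comp_mem_wordTrivial hp hq h
  invol_mem _ hp := invol_mem_wordTrivial hp
  rotLU_mem _ hp h := rotLU_mem_wordTrivial hp h
  rotLD_mem _ hp h := by
    rw [rotLD_eq_invol_rotLU_invol]
    exact invol_mem_wordTrivial (rotLU_mem_wordTrivial (invol_mem_wordTrivial hp) h)
  rotRU_mem _ hp h := rotRU_mem_wordTrivial hp h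
  rotRD_mem _ hp h := by
    rw [rotRD_eq_invol_rotRU_invol]
    exact invol_mem_wordTrivial (rotRU_mem_wordTrivial (invol_mem_wordTrivial hp) h)

end PartitionDiagram

lemma generatedCategory_subset {S M : Set PartitionDiagram} (hM : IsPartitionCategory M)
    (hS : S ⊆ M) : generatedCategory S ⊆ M :=
  Set.sInter_subset_of_mem ⟨hM, hS⟩

lemma pairPartition_mem_generatedCategory (S : Set PartitionDiagram) :
    pairPartition ∈ generatedCategory S :=
  Set.mem_sInter.2 fun _ hM => hM.1.pair_mem

/-- For the category of partitions `C = ⟨▷⟩` generated by the pair positioner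
partition, `F(C)` is the trivial subgroup `{e}` of `Z_2^{*∞}`: `w(p,l) = e` for every
`p ∈ ⟨▷⟩` and every labelling `l`. -/
theorem Fmap_generated_pairPositioner :
    Fmap (generatedCategory {PartitionDiagram.pairPositioner}) = {(1 : FreeZ2)} := by
  have hsub : generatedCategory {pairPositioner} ⊆ wordTrivial :=
    generatedCategory_subset isPartitionCategory_wordTrivial
      (Set.singleton_subset_iff.2 pairPositioner_mem_wordTrivial)
  refine Set.eq_singleton_iff_unique_mem.2 ⟨?_, ?_⟩
  · exact ⟨pairPartition, pairPartition_mem_generatedCategory _, fun _ => 0, fun _ _ => Iff.rfl,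
      wordOf_pairPartition⟩
  · rintro _ ⟨p, hp, lab, hlab, rfl⟩
    exact hsub hp lab hlab.isBlockConstant
end
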